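/- arXiv:2102.09080 — 6 statements merged into one kernel-verified Lean document; each statement's English description precedes it below -/
import Mathlib

section
/- The knockoff matrix satisfies X̃ᵀX = Σ − D; that is, the inner products between each knockoff column and each original column reproduce those of the original design except that the diagonal is reduced by the vector s. -/
open Matrix

variable {m k : Type*} [Fintype m] [Fintype k] [DecidableEq k] {R : Type*} [CommRing R]

theorem Matrix.transpose_mul_inv_gram_mul_self (A : Matrix m k R) (hA : IsUnit (Aᵀ * A).det) :
    (A * (Aᵀ * A)⁻¹)ᵀ * A = 1 := by
  rw [transpose_mul, transpose_nonsing_inv, transpose_mul, transpose_transpose, Matrix.mul_assoc,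
    nonsing_inv_mul _ hA]

theorem knockoff_cross_gram_general
    {n d : ℕ}
    (X : Matrix (Fin n) (Fin d) ℝ)
    (hSg : (Xᵀ * X).PosDef)
    (s : Fin d → ℝ)
    (U : Matrix (Fin n) (Fin d) ℝ) (hXU : Xᵀ * U = 0)
    (C : Matrix (Fin d) (Fin d) ℝ) :
    (X * (Xᵀ * X)⁻¹ * (Xᵀ * X - Matrix.diagonal s) + U * C)ᵀ * X
      = Xᵀ * X - Matrix.diagonal s := by
  have hGram : (X * (Xᵀ * X)⁻¹)ᵀ * X = 1 :=
    X.transpose_mul_inv_gram_mul_self (isUnit_iff_ne_zero.mpr hSg.det_pos.ne')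
  have hUX : Uᵀ * X = 0 := by
    rw [← transpose_transpose (Uᵀ * X), transpose_mul, transpose_transpose, hXU, transpose_zero]
  have hSym : (Xᵀ * X - diagonal s)ᵀ = Xᵀ * X - diagonal s := by
    rw [transpose_sub, transpose_mul, transpose_transpose, diagonal_transpose]
  rw [transpose_add, Matrix.add_mul, transpose_mul (X * _), transpose_mul U, Matrix.mul_assoc,
    hGram, Matrix.mul_assoc, hUX, hSym, Matrix.mul_one, Matrix.mul_zero, add_zero]

theorem knockoff_cross_gram
    {n d : ℕ} (hd : 1 ≤ d) (hnd : 2 * d ≤ n)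
    (X : Matrix (Fin n) (Fin d) ℝ) (hrank : X.rank = d)
    (hSg : (Xᵀ * X).PosDef)
    (s : Fin d → ℝ) (hs : ∀ j, 0 < s j)
    (hPD : ((2 : ℝ) • (Xᵀ * X) - Matrix.diagonal s).PosDef)
    (U : Matrix (Fin n) (Fin d) ℝ) (hUU : Uᵀ * U = 1) (hXU : Xᵀ * U = 0)
    (C : Matrix (Fin d) (Fin d) ℝ) (hC : C.PosSemidef)
    (hCsq : C * C = (2 : ℝ) • Matrix.diagonal s
        - Matrix.diagonal s * (Xᵀ * X)⁻¹ * Matrix.diagonal s) :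
    (X * (Xᵀ * X)⁻¹ * (Xᵀ * X - Matrix.diagonal s) + U * C)ᵀ * X
      = Xᵀ * X - Matrix.diagonal s :=
  knockoff_cross_gram_general X hSg s U hXU C
end

section
/- The knockoff matrix satisfies X̃ᵀX̃ = Σ; that is, the knockoff columns have exactly the same Gram matrix as the original design matrix. -/
/-! Since `Xᵀ U = 0` and `Uᵀ U = 1`, the Gram matrix of `X A + U C` splits as `Aᵀ Σ A + Cᵀ C`.
With `A = Σ⁻¹ (Σ - D)` the first term is `(Σ - D) Σ⁻¹ (Σ - D) = Σ - 2D + D Σ⁻¹ D`, and the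
second is `C² = 2D - D Σ⁻¹ D`; they add up to `Σ`. -/

open Matrix

theorem Matrix.gram_mul_add_mul_of_transpose_mul_eq_zero
    {m n k l R : Type*} [Fintype m] [Fintype n] [Fintype k] [CommRing R]
    {X : Matrix m n R} {U : Matrix m k R} (hXU : Xᵀ * U = 0)
    (A : Matrix n l R) (B : Matrix k l R) :
    (X * A + U * B)ᵀ * (X * A + U * B) = Aᵀ * (Xᵀ * X) * A + Bᵀ * (Uᵀ * U) * B := by
  have hUX : Uᵀ * X = 0 := by rw [← transpose_transpose X, ← transpose_mul, hXU, transpose_zero]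
  have hcross : Aᵀ * (Xᵀ * U) * B = 0 := by rw [hXU, Matrix.mul_zero, Matrix.zero_mul]
  have hcross' : Bᵀ * (Uᵀ * X) * A = 0 := by rw [hUX, Matrix.mul_zero, Matrix.zero_mul]
  simp only [transpose_add, transpose_mul, Matrix.add_mul, Matrix.mul_add, Matrix.mul_assoc]
    at hcross hcross' ⊢
  rw [hcross, hcross', add_zero, zero_add]

theorem Matrix.transpose_inv_mul_sub_mul_mul_inv_mul_sub
    {n R : Type*} [Fintype n] [DecidableEq n] [CommRing R]
    {S D : Matrix n n R} (hS : Sᵀ = S) (hD : Dᵀ = D) (hdet : IsUnit S.det) :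
    (S⁻¹ * (S - D))ᵀ * S * (S⁻¹ * (S - D)) = S - 2 • D + D * S⁻¹ * D := by
  have hSinv : S * S⁻¹ = 1 := mul_nonsing_inv S hdet
  have hinvS : S⁻¹ * S = 1 := nonsing_inv_mul S hdet
  calc (S⁻¹ * (S - D))ᵀ * S * (S⁻¹ * (S - D))
      = (S - D) * S⁻¹ * (S - D) := by
        rw [transpose_mul, transpose_nonsing_inv, transpose_sub, hS, hD,
          Matrix.mul_assoc (S - D) S⁻¹ S, hinvS, Matrix.mul_one, Matrix.mul_assoc]
    _ = S * S⁻¹ * S - S * S⁻¹ * D - D * S⁻¹ * S + D * S⁻¹ * D := by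
        simp only [Matrix.sub_mul, Matrix.mul_sub]
        abel
    _ = S - 2 • D + D * S⁻¹ * D := by
        rw [hSinv, Matrix.mul_assoc D, hinvS, Matrix.one_mul, Matrix.one_mul, Matrix.mul_one,
          two_smul]
        abel

theorem knockoff_gram_general
    {n d : ℕ}
    (X : Matrix (Fin n) (Fin d) ℝ)
    (hSg : (Xᵀ * X).PosDef)
    (s : Fin d → ℝ)
    (U : Matrix (Fin n) (Fin d) ℝ) (hUU : Uᵀ * U = 1) (hXU : Xᵀ * U = 0)
    (C : Matrix (Fin d) (Fin d) ℝ) (hC : C.PosSemidef)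
    (hCsq : C * C = (2 : ℝ) • Matrix.diagonal s
        - Matrix.diagonal s * (Xᵀ * X)⁻¹ * Matrix.diagonal s) :
    (X * (Xᵀ * X)⁻¹ * (Xᵀ * X - Matrix.diagonal s) + U * C)ᵀ
        * (X * (Xᵀ * X)⁻¹ * (Xᵀ * X - Matrix.diagonal s) + U * C)
      = Xᵀ * X := by
  have hdet : IsUnit (Xᵀ * X).det := isUnit_iff_ne_zero.mpr hSg.det_pos.ne'
  have hCsymm : Cᵀ = C := hC.isHermitian.eq
  have hSsymm : (Xᵀ * X)ᵀ = Xᵀ * X := by rw [transpose_mul, transpose_transpose]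
  rw [Matrix.mul_assoc X, gram_mul_add_mul_of_transpose_mul_eq_zero hXU,
    transpose_inv_mul_sub_mul_mul_inv_mul_sub hSsymm (diagonal_transpose s) hdet,
    hUU, Matrix.mul_one, hCsymm, hCsq, two_smul, two_smul]
  abel

theorem knockoff_gram
    {n d : ℕ} (hd : 1 ≤ d) (hnd : 2 * d ≤ n)
    (X : Matrix (Fin n) (Fin d) ℝ) (hrank : X.rank = d)
    (hSg : (Xᵀ * X).PosDef)
    (s : Fin d → ℝ) (hs : ∀ j, 0 < s j)
    (hPD : ((2 : ℝ) • (Xᵀ * X) - Matrix.diagonal s).PosDef)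
    (U : Matrix (Fin n) (Fin d) ℝ) (hUU : Uᵀ * U = 1) (hXU : Xᵀ * U = 0)
    (C : Matrix (Fin d) (Fin d) ℝ) (hC : C.PosSemidef)
    (hCsq : C * C = (2 : ℝ) • Matrix.diagonal s
        - Matrix.diagonal s * (Xᵀ * X)⁻¹ * Matrix.diagonal s) :
    (X * (Xᵀ * X)⁻¹ * (Xᵀ * X - Matrix.diagonal s) + U * C)ᵀ
        * (X * (Xᵀ * X)⁻¹ * (Xᵀ * X - Matrix.diagonal s) + U * C)
      = Xᵀ * X :=
  knockoff_gram_general X hSg s U hUU hXU C hC hCsq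
end

section
/- For a symmetric positive definite matrix Σ ∈ ℝ^{d×d} and a diagonal matrix D = diag(s) with strictly positive diagonal entries, the matrix 2Σ − D is positive definite if and only if the matrix 2D − DΣ⁻¹D is positive definite. -/
/-!
Up to the factor 2, the matrices `2Σ - D` and `2D - DΣ⁻¹D` are the two Schur complements of the
block matrix `[[2Σ, D], [D, D]]`. Positive semidefiniteness of either Schur complement is
equivalent to that of the block matrix, and the two factorisations of its determinant show that
one complement is nonsingular iff the other is.
-/

open Matrix
open scoped ComplexOrder

namespace Matrix

variable {𝕜 m n : Type*} [RCLike 𝕜] [Fintype m] [Fintype n] [DecidableEq m] [DecidableEq n]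

theorem posDef_iff_posSemidef_and_det_ne_zero {M : Matrix n n 𝕜} :
    M.PosDef ↔ M.PosSemidef ∧ M.det ≠ 0 :=
  ⟨fun h => ⟨h.posSemidef, h.det_pos.ne'⟩, fun h => h.1.posDef_iff_det_ne_zero.2 h.2⟩

theorem posDef_sub_mul_inv_mul_conjTranspose_iff {A : Matrix m m 𝕜} {D : Matrix n n 𝕜}
    (B : Matrix m n 𝕜) (hA : A.PosDef) (hD : D.PosDef) :
    (A - B * D⁻¹ * Bᴴ).PosDef ↔ (D - Bᴴ * A⁻¹ * B).PosDef := by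
  have := hA.isUnit.invertible
  have := hD.isUnit.invertible
  -- both sides are `det (fromBlocks A B Bᴴ D)`
  have hdet : D.det * (A - B * D⁻¹ * Bᴴ).det = A.det * (D - Bᴴ * A⁻¹ * B).det := by
    rw [← invOf_eq_nonsing_inv, ← invOf_eq_nonsing_inv, ← det_fromBlocks₁₁, det_fromBlocks₂₂]
  rw [posDef_iff_posSemidef_and_det_ne_zero, posDef_iff_posSemidef_and_det_ne_zero,
    ← PosDef.fromBlocks₁₁ B D hA, ← PosDef.fromBlocks₂₂ A B hD]
  refine and_congr_right fun _ => ?_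
  rw [← mul_ne_zero_iff_left hD.det_pos.ne', hdet, mul_ne_zero_iff_left hA.det_pos.ne']

omit [Fintype n] [DecidableEq n] in
theorem posDef_smul_iff {M : Matrix n n 𝕜} {c : ℝ} (hc : 0 < c) : (c • M).PosDef ↔ M.PosDef :=
  ⟨fun h => by simpa [smul_smul, inv_mul_cancel₀ hc.ne'] using h.smul (inv_pos.2 hc),
    fun h => h.smul hc⟩

end Matrix

theorem posDef_two_sigma_sub_D_iff
    {d : ℕ} (Sg : Matrix (Fin d) (Fin d) ℝ) (hSg : Sg.PosDef)
    (s : Fin d → ℝ) (hs : ∀ j, 0 < s j) :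
    ((2 : ℝ) • Sg - Matrix.diagonal s).PosDef ↔
      ((2 : ℝ) • Matrix.diagonal s
        - Matrix.diagonal s * Sg⁻¹ * Matrix.diagonal s).PosDef := by
  have hD : (diagonal s).PosDef := posDef_diagonal_iff.2 hs
  have hD_herm : (diagonal s)ᴴ = diagonal s := hD.isHermitian
  have hLHS : (2 : ℝ) • Sg - diagonal s
      = (2 : ℝ) • Sg - diagonal s * (diagonal s)⁻¹ * (diagonal s)ᴴ := by
    rw [mul_nonsing_inv _ hD.det_pos.ne'.isUnit, one_mul, hD_herm]
  have hRHS : (2 : ℝ) • diagonal s - diagonal s * Sg⁻¹ * diagonal s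
      = (2 : ℝ) • (diagonal s - (diagonal s)ᴴ * ((2 : ℝ) • Sg)⁻¹ * diagonal s) := by
    rw [Matrix.inv_smul Sg (2 : ℝ) hSg.det_pos.ne'.isUnit, hD_herm, Matrix.mul_smul,
      Matrix.smul_mul, smul_sub, smul_smul, mul_invOf_self, one_smul]
  rw [hLHS, hRHS, posDef_smul_iff two_pos]
  exact posDef_sub_mul_inv_mul_conjTranspose_iff _ (hSg.smul two_pos) hD
end

section
/- The matrices X + X̃ and X − X̃ have orthogonal column spaces: (X + X̃)ᵀ(X − X̃) = 0. -/
/-!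
Write `X̃ = X B + Ũ C` with `B = Σ⁻¹(Σ - D)`. Since `Ũ` is orthonormal and orthogonal to `X`,
`Xᵀ X̃ = Σ B = Σ - D` is symmetric and
`X̃ᵀ X̃ = Bᵀ Σ B + C² = (Σ - 2D + D Σ⁻¹ D) + (2D - D Σ⁻¹ D) = Σ`.
Expanding `(X + X̃)ᵀ (X - X̃) = XᵀX - XᵀX̃ + X̃ᵀX - X̃ᵀX̃`, the cross terms cancel by symmetry and
the Gram terms cancel because `X̃ᵀ X̃ = Xᵀ X`.
-/

open Matrix

section

variable {m n p k R : Type*} [CommRing R] [Fintype m]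

theorem Matrix.transpose_add_mul_sub_eq_zero {X Y : Matrix m n R}
    (hcross : (Xᵀ * Y).IsSymm) (hgram : Yᵀ * Y = Xᵀ * X) :
    (X + Y)ᵀ * (X - Y) = 0 := by
  have hYX : Yᵀ * X = Xᵀ * Y := by
    simpa only [IsSymm, transpose_mul, transpose_transpose] using hcross
  rw [transpose_add, Matrix.add_mul, Matrix.mul_sub, Matrix.mul_sub, hYX, hgram]
  abel

variable [Fintype n] [Fintype p]

theorem Matrix.transpose_mul_add_mul_of_transpose_mul_eq_zero {X : Matrix m n R} {U : Matrix m p R}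
    (hXU : Xᵀ * U = 0) (B : Matrix n k R) (C : Matrix p k R) :
    Xᵀ * (X * B + U * C) = Xᵀ * X * B := by
  rw [Matrix.mul_add, ← Matrix.mul_assoc, ← Matrix.mul_assoc, hXU, Matrix.zero_mul, add_zero]

theorem Matrix.gram_add_mul_of_orthonormal [DecidableEq p] {X : Matrix m n R} {U : Matrix m p R}
    (hUU : Uᵀ * U = 1) (hXU : Xᵀ * U = 0) (B : Matrix n k R) (C : Matrix p k R) :
    (X * B + U * C)ᵀ * (X * B + U * C) = Bᵀ * (Xᵀ * X) * B + Cᵀ * C := by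
  have hUX : Uᵀ * X = 0 := by
    rw [← transpose_transpose (Uᵀ * X), transpose_mul, transpose_transpose, hXU, transpose_zero]
  simp only [transpose_add, transpose_mul, Matrix.add_mul, Matrix.mul_add, Matrix.mul_assoc]
  simp only [← Matrix.mul_assoc Xᵀ, ← Matrix.mul_assoc Uᵀ, hXU, hUX, hUU, Matrix.zero_mul,
    Matrix.mul_zero, Matrix.one_mul, add_zero, zero_add]

variable [DecidableEq n]

theorem Matrix.transpose_nonsing_inv_mul_mul_nonsing_inv_mul {S : Matrix n n R} (hS : S.IsSymm)
    (hdet : IsUnit S.det) (M : Matrix n k R) :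
    (S⁻¹ * M)ᵀ * S * (S⁻¹ * M) = Mᵀ * S⁻¹ * M := by
  rw [transpose_mul, hS.inv.eq, Matrix.mul_assoc Mᵀ, Matrix.mul_assoc, Matrix.mul_assoc,
    ← Matrix.mul_assoc S, mul_nonsing_inv _ hdet, Matrix.one_mul, Matrix.mul_assoc]

theorem Matrix.sub_mul_nonsing_inv_mul_sub {S : Matrix n n R} (hdet : IsUnit S.det)
    (D : Matrix n n R) :
    (S - D) * S⁻¹ * (S - D) = S - (2 : R) • D + D * S⁻¹ * D := by
  rw [Matrix.sub_mul, Matrix.sub_mul, Matrix.mul_sub, Matrix.mul_sub, mul_nonsing_inv _ hdet,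
    Matrix.one_mul, Matrix.mul_assoc D, nonsing_inv_mul _ hdet, Matrix.mul_one, Matrix.one_mul,
    two_smul]
  abel

end

theorem knockoff_sum_diff_orthogonal_general
    {n d : ℕ}
    (X : Matrix (Fin n) (Fin d) ℝ)
    (hSg : (Xᵀ * X).PosDef)
    (s : Fin d → ℝ)
    (U : Matrix (Fin n) (Fin d) ℝ) (hUU : Uᵀ * U = 1) (hXU : Xᵀ * U = 0)
    (C : Matrix (Fin d) (Fin d) ℝ) (hC : C.PosSemidef)
    (hCsq : C * C = (2 : ℝ) • Matrix.diagonal s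
        - Matrix.diagonal s * (Xᵀ * X)⁻¹ * Matrix.diagonal s) :
    (X + (X * (Xᵀ * X)⁻¹ * (Xᵀ * X - Matrix.diagonal s) + U * C))ᵀ
        * (X - (X * (Xᵀ * X)⁻¹ * (Xᵀ * X - Matrix.diagonal s) + U * C))
      = 0 := by
  have hdet : IsUnit (Xᵀ * X).det := (isUnit_iff_isUnit_det _).mp hSg.isUnit
  have hSymm : (Xᵀ * X).IsSymm := by rw [IsSymm, transpose_mul, transpose_transpose]
  have hCsymm : Cᵀ = C := (conjTranspose_eq_transpose_of_trivial C).symm.trans hC.1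
  rw [Matrix.mul_assoc X]
  apply transpose_add_mul_sub_eq_zero
  · rw [transpose_mul_add_mul_of_transpose_mul_eq_zero hXU, ← Matrix.mul_assoc,
      mul_nonsing_inv _ hdet, Matrix.one_mul]
    exact hSymm.sub (isSymm_diagonal s)
  · rw [gram_add_mul_of_orthonormal hUU hXU,
      transpose_nonsing_inv_mul_mul_nonsing_inv_mul hSymm hdet, hSymm.sub (isSymm_diagonal s),
      sub_mul_nonsing_inv_mul_sub hdet, hCsymm, hCsq]
    abel

theorem knockoff_sum_diff_orthogonal
    {n d : ℕ} (hd : 1 ≤ d) (hnd : 2 * d ≤ n)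
    (X : Matrix (Fin n) (Fin d) ℝ) (hrank : X.rank = d)
    (hSg : (Xᵀ * X).PosDef)
    (s : Fin d → ℝ) (hs : ∀ j, 0 < s j)
    (hPD : ((2 : ℝ) • (Xᵀ * X) - Matrix.diagonal s).PosDef)
    (U : Matrix (Fin n) (Fin d) ℝ) (hUU : Uᵀ * U = 1) (hXU : Xᵀ * U = 0)
    (C : Matrix (Fin d) (Fin d) ℝ) (hC : C.PosSemidef)
    (hCsq : C * C = (2 : ℝ) • Matrix.diagonal s
        - Matrix.diagonal s * (Xᵀ * X)⁻¹ * Matrix.diagonal s) :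
    (X + (X * (Xᵀ * X)⁻¹ * (Xᵀ * X - Matrix.diagonal s) + U * C))ᵀ
        * (X - (X * (Xᵀ * X)⁻¹ * (Xᵀ * X - Matrix.diagonal s) + U * C))
      = 0 :=
  knockoff_sum_diff_orthogonal_general X hSg s U hUU hXU C hC hCsq
end

section
/- The Gram matrix of the difference of the design and its knockoff is (X − X̃)ᵀ(X − X̃) = 2D. -/
/-!
With `Σ = XᵀX`, the difference `X - X̃` equals `XΣ⁻¹D - ŨC`. The two summands have
orthogonal column spaces because `XᵀŨ = 0`, so the Gram matrix splits as
`DΣ⁻¹(XᵀX)Σ⁻¹D + CŨᵀŨC = DΣ⁻¹D + C²`, and `C² = 2D - DΣ⁻¹D` by the choice of `C`.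
-/

open Matrix

namespace Matrix

variable {m n R : Type*} [CommRing R]

theorem mul_nonsing_inv_mul_sub [Fintype n] [DecidableEq n] {M : Matrix n n R}
    (hM : IsUnit M.det) (A : Matrix m n R) (D : Matrix n n R) :
    A * M⁻¹ * (M - D) = A - A * M⁻¹ * D := by
  rw [Matrix.mul_sub, Matrix.mul_assoc A, nonsing_inv_mul M hM, Matrix.mul_one]

variable [Fintype m]

theorem transpose_sub_mul_sub_of_transpose_mul_eq_zero {A B : Matrix m n R}
    (h : Aᵀ * B = 0) : (A - B)ᵀ * (A - B) = Aᵀ * A + Bᵀ * B := by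
  have h' : Bᵀ * A = 0 := by simpa using congrArg transpose h
  simp only [transpose_sub, Matrix.sub_mul, Matrix.mul_sub, h, h']
  abel

variable [Fintype n] [DecidableEq n]

theorem transpose_mul_mul_self_of_transpose_mul_self_eq_one {U : Matrix m n R}
    (hU : Uᵀ * U = 1) (C : Matrix n n R) : (U * C)ᵀ * (U * C) = Cᵀ * C := by
  rw [transpose_mul, Matrix.mul_assoc, ← Matrix.mul_assoc Uᵀ, hU, Matrix.one_mul]

theorem gram_mul_nonsing_inv_gram_mul {X : Matrix m n R} (hX : IsUnit (Xᵀ * X).det)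
    (D : Matrix n n R) :
    (X * (Xᵀ * X)⁻¹ * D)ᵀ * (X * (Xᵀ * X)⁻¹ * D) = Dᵀ * (Xᵀ * X)⁻¹ * D := by
  calc (X * (Xᵀ * X)⁻¹ * D)ᵀ * (X * (Xᵀ * X)⁻¹ * D)
      = Dᵀ * ((Xᵀ * X)⁻¹ * (Xᵀ * X)) * (Xᵀ * X)⁻¹ * D := by
        simp only [transpose_mul, transpose_nonsing_inv, transpose_transpose, Matrix.mul_assoc]
    _ = Dᵀ * (Xᵀ * X)⁻¹ * D := by rw [nonsing_inv_mul _ hX, Matrix.mul_one]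

end Matrix

theorem knockoff_diff_gram_general
    {n d : ℕ}
    (X : Matrix (Fin n) (Fin d) ℝ)
    (hSg : (Xᵀ * X).PosDef)
    (s : Fin d → ℝ)
    (U : Matrix (Fin n) (Fin d) ℝ) (hUU : Uᵀ * U = 1) (hXU : Xᵀ * U = 0)
    (C : Matrix (Fin d) (Fin d) ℝ) (hC : C.PosSemidef)
    (hCsq : C * C = (2 : ℝ) • Matrix.diagonal s
        - Matrix.diagonal s * (Xᵀ * X)⁻¹ * Matrix.diagonal s) :
    (X - (X * (Xᵀ * X)⁻¹ * (Xᵀ * X - Matrix.diagonal s) + U * C))ᵀ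
        * (X - (X * (Xᵀ * X)⁻¹ * (Xᵀ * X - Matrix.diagonal s) + U * C))
      = (2 : ℝ) • Matrix.diagonal s := by
  have hX : IsUnit (Xᵀ * X).det := isUnit_iff_ne_zero.mpr hSg.det_pos.ne'
  set D := Matrix.diagonal s
  have hdiff : X - (X * (Xᵀ * X)⁻¹ * (Xᵀ * X - D) + U * C) = X * (Xᵀ * X)⁻¹ * D - U * C := by
    rw [mul_nonsing_inv_mul_sub hX]
    abel
  have hcross : (X * (Xᵀ * X)⁻¹ * D)ᵀ * (U * C) = 0 := by
    simp only [transpose_mul, Matrix.mul_assoc]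
    rw [← Matrix.mul_assoc Xᵀ U, hXU, Matrix.zero_mul, Matrix.mul_zero, Matrix.mul_zero]
  rw [hdiff, transpose_sub_mul_sub_of_transpose_mul_eq_zero hcross,
    gram_mul_nonsing_inv_gram_mul hX, transpose_mul_mul_self_of_transpose_mul_self_eq_one hUU,
    ← conjTranspose_eq_transpose_of_trivial C, hC.1.eq, hCsq, diagonal_transpose]
  abel

theorem knockoff_diff_gram
    {n d : ℕ} (hd : 1 ≤ d) (hnd : 2 * d ≤ n)
    (X : Matrix (Fin n) (Fin d) ℝ) (hrank : X.rank = d)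
    (hSg : (Xᵀ * X).PosDef)
    (s : Fin d → ℝ) (hs : ∀ j, 0 < s j)
    (hPD : ((2 : ℝ) • (Xᵀ * X) - Matrix.diagonal s).PosDef)
    (U : Matrix (Fin n) (Fin d) ℝ) (hUU : Uᵀ * U = 1) (hXU : Xᵀ * U = 0)
    (C : Matrix (Fin d) (Fin d) ℝ) (hC : C.PosSemidef)
    (hCsq : C * C = (2 : ℝ) • Matrix.diagonal s
        - Matrix.diagonal s * (Xᵀ * X)⁻¹ * Matrix.diagonal s) :
    (X - (X * (Xᵀ * X)⁻¹ * (Xᵀ * X - Matrix.diagonal s) + U * C))ᵀ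
        * (X - (X * (Xᵀ * X)⁻¹ * (Xᵀ * X - Matrix.diagonal s) + U * C))
      = (2 : ℝ) • Matrix.diagonal s :=
  knockoff_diff_gram_general X hSg s U hUU hXU C hC hCsq
end

section
/- For every vector Y ∈ ℝ^n, the first knockoff-based estimator decomposes around the ordinary least squares estimator: (2Σ − D)⁻¹(X + X̃)ᵀY = Σ⁻¹XᵀY + (2Σ − D)⁻¹(2D − DΣ⁻¹D)^{1/2}ŨᵀY. -/
open Matrix

/-!
With `Σ = XᵀX` and `A = 2Σ - D`, the transpose of `X + X̃` is
`Xᵀ + (Σ - D)Σ⁻¹Xᵀ + CUᵀ = AΣ⁻¹Xᵀ + CUᵀ`, because `Xᵀ = ΣΣ⁻¹Xᵀ`.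
Multiplying by `A⁻¹` cancels the factor `A` in the first term, which leaves the
least squares estimator `Σ⁻¹XᵀY` plus the correction `A⁻¹CUᵀY`.
-/

namespace Matrix

variable {m k R : Type*} [Fintype m] [Fintype k] [DecidableEq k] [CommRing R]
  (X U : Matrix m k R) (D C : Matrix k k R)

/-- The knockoff matrix `X̃`, with `C` standing for `(2D - DΣ⁻¹D)^{1/2}`. -/
noncomputable def knockoff : Matrix m k R :=
  X * (Xᵀ * X)⁻¹ * (Xᵀ * X - D) + U * C

variable {X U D C}

theorem transpose_knockoff (hD : Dᵀ = D) (hC : Cᵀ = C) :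
    (knockoff X U D C)ᵀ = (Xᵀ * X - D) * (Xᵀ * X)⁻¹ * Xᵀ + C * Uᵀ := by
  have hS : (Xᵀ * X)ᵀ = Xᵀ * X := by rw [transpose_mul, transpose_transpose]
  simp only [knockoff, transpose_add, transpose_mul, transpose_sub, transpose_nonsing_inv,
    hS, hD, hC, Matrix.mul_assoc]

theorem transpose_add_knockoff (hS : IsUnit (Xᵀ * X).det) (hD : Dᵀ = D) (hC : Cᵀ = C) :
    (X + knockoff X U D C)ᵀ = ((2 : R) • (Xᵀ * X) - D) * (Xᵀ * X)⁻¹ * Xᵀ + C * Uᵀ := by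
  have hXt : Xᵀ = Xᵀ * X * (Xᵀ * X)⁻¹ * Xᵀ := by
    rw [mul_nonsing_inv _ hS, Matrix.one_mul]
  rw [transpose_add, transpose_knockoff hD hC, ← add_assoc, two_smul]
  nth_rw 1 [hXt]
  simp only [Matrix.add_mul, Matrix.sub_mul]
  abel

theorem inv_mul_transpose_add_knockoff (hS : IsUnit (Xᵀ * X).det)
    (hA : IsUnit ((2 : R) • (Xᵀ * X) - D).det) (hD : Dᵀ = D) (hC : Cᵀ = C) :
    ((2 : R) • (Xᵀ * X) - D)⁻¹ * (X + knockoff X U D C)ᵀ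
      = (Xᵀ * X)⁻¹ * Xᵀ + ((2 : R) • (Xᵀ * X) - D)⁻¹ * C * Uᵀ := by
  rw [transpose_add_knockoff hS hD hC, Matrix.mul_add, Matrix.mul_assoc, Matrix.mul_assoc,
    ← Matrix.mul_assoc _ _ ((Xᵀ * X)⁻¹ * Xᵀ), nonsing_inv_mul _ hA, Matrix.one_mul]

end Matrix

theorem knockoff_estimator_one_decomposition_general
    {n d : ℕ}
    (X : Matrix (Fin n) (Fin d) ℝ)
    (hSg : (Xᵀ * X).PosDef)
    (s : Fin d → ℝ)
    (hPD : ((2 : ℝ) • (Xᵀ * X) - Matrix.diagonal s).PosDef)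
    (U : Matrix (Fin n) (Fin d) ℝ)
    (C : Matrix (Fin d) (Fin d) ℝ) (hC : C.PosSemidef) :
    ∀ Y : Fin n → ℝ,
      ((2 : ℝ) • (Xᵀ * X) - Matrix.diagonal s)⁻¹ *ᵥ
          ((X + (X * (Xᵀ * X)⁻¹ * (Xᵀ * X - Matrix.diagonal s) + U * C))ᵀ *ᵥ Y)
        = (Xᵀ * X)⁻¹ *ᵥ (Xᵀ *ᵥ Y)
          + ((2 : ℝ) • (Xᵀ * X) - Matrix.diagonal s)⁻¹ *ᵥ (C *ᵥ (Uᵀ *ᵥ Y)) := by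
  intro Y
  have hmat := inv_mul_transpose_add_knockoff (U := U) hSg.det_pos.ne'.isUnit hPD.det_pos.ne'.isUnit
    (isSymm_diagonal s) (isHermitian_iff_isSymm.mp hC.isHermitian)
  rw [← knockoff, mulVec_mulVec, hmat, add_mulVec, mulVec_mulVec, mulVec_mulVec, mulVec_mulVec]

theorem knockoff_estimator_one_decomposition
    {n d : ℕ} (hd : 1 ≤ d) (hnd : 2 * d ≤ n)
    (X : Matrix (Fin n) (Fin d) ℝ) (hrank : X.rank = d)
    (hSg : (Xᵀ * X).PosDef)
    (s : Fin d → ℝ) (hs : ∀ j, 0 < s j)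
    (hPD : ((2 : ℝ) • (Xᵀ * X) - Matrix.diagonal s).PosDef)
    (U : Matrix (Fin n) (Fin d) ℝ) (hUU : Uᵀ * U = 1) (hXU : Xᵀ * U = 0)
    (C : Matrix (Fin d) (Fin d) ℝ) (hC : C.PosSemidef)
    (hCsq : C * C = (2 : ℝ) • Matrix.diagonal s
        - Matrix.diagonal s * (Xᵀ * X)⁻¹ * Matrix.diagonal s) :
    ∀ Y : Fin n → ℝ,
      ((2 : ℝ) • (Xᵀ * X) - Matrix.diagonal s)⁻¹ *ᵥ
          ((X + (X * (Xᵀ * X)⁻¹ * (Xᵀ * X - Matrix.diagonal s) + U * C))ᵀ *ᵥ Y)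
        = (Xᵀ * X)⁻¹ *ᵥ (Xᵀ *ᵥ Y)
          + ((2 : ℝ) • (Xᵀ * X) - Matrix.diagonal s)⁻¹ *ᵥ (C *ᵥ (Uᵀ *ᵥ Y)) :=
  knockoff_estimator_one_decomposition_general X hSg s hPD U C hC
end
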